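/- In the real constraint domain ℛ𝕖 — whose basic values are the real numbers, which has no data constructors, and whose primitive predicates include the ternary op₊, with op₊(t,s,u) true in ℛ𝕖 iff t, s, u are real numbers with t + s = u, and the binary cp≥, with cp≥(t,s) true in ℛ𝕖 iff t, s are real numbers with t ≥ s — consider the existential constraint π(X) = ∃Y(op₊(Y,Y,X)), a CLP(ℛ𝕖)-program 𝒫 including the clause p(X) ← op₊(Y,Y,X) and containing no other occurrence of the defined predicate symbol p, the constraint set Π = {cp≥(X, 0.0)} and the variable X. Then Π ⊨_ℛ𝕖 π(X), but 𝒫 ⊢_CHL (p(X) ⇐ Π) does not hold; in particular, there is no term s such that Π ⊨_ℛ𝕖 op₊(s,s,X). -/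

import Mathlib

/-!
Every real number has a half, so `Π ⊨ ∃Y (Y + Y = X)`. But `ℛ𝕖` has no data constructors, so a
term is a constant or a variable, and no such term `s` can track `X / 2` across the two solutions
`X = 0` and `X = 1` of `Π`: hence `Π ⊭ op₊(s,s,X)`. A CHL derivation of `p(X)` must use the only
clause for `p`, and its (EA) and (PA) premises would produce exactly such a term, namely `Yθ`.
-/

open Classical

namespace SQCLP

/-- A term signature: variables, basic values and ranked data constructors. -/
structure TSig where
  Var : Type
  BV : Type
  DC : Type
  dcArity : DC → ℕ

/-- Terms over a term signature. -/
inductive Term (S : TSig) : Type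
  | var : S.Var → Term S
  | bv : S.BV → Term S
  | app : S.DC → List (Term S) → Term S

/-- Substitutions map variables to terms. -/
abbrev Subst (S : TSig) := S.Var → Term S

variable {S : TSig}

mutual
  /-- Application of a substitution to a term. -/
  def Term.subst (θ : Subst S) : Term S → Term S
    | .var x => θ x
    | .bv u => .bv u
    | .app c ts => .app c (Term.substList θ ts)
  /-- Application of a substitution to a list of terms. -/
  def Term.substList (θ : Subst S) : List (Term S) → List (Term S)
    | [] => []
    | t :: ts => Term.subst θ t :: Term.substList θ ts
end

/-- Composition of substitutions: `(σ.comp ν) x = (σ x) ν`. -/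
def Subst.comp (σ ν : Subst S) : Subst S := fun x => (σ x).subst ν

/-- A term is ground if it contains no variables. -/
inductive Term.IsGround : Term S → Prop
  | bv (u : S.BV) : IsGround (.bv u)
  | app (c : S.DC) (ts : List (Term S)) : (∀ t ∈ ts, IsGround t) → IsGround (.app c ts)

/-- The variable `x` occurs in the given term. -/
inductive Term.HasVar (x : S.Var) : Term S → Prop
  | var : HasVar x (.var x)
  | app (c : S.DC) (ts : List (Term S)) (t : Term S) :
      t ∈ ts → HasVar x t → HasVar x (.app c ts)

/-- A valuation is a substitution all whose values are ground terms. -/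
def IsValuation (η : Subst S) : Prop := ∀ x, (η x).IsGround

/-- A constraint domain over a term signature: ranked primitive predicate
symbols together with their interpretation on (ground) argument tuples. -/
structure ConstraintDomain (S : TSig) where
  PP : Type
  ppArity : PP → ℕ
  primTrue : PP → List (Term S) → Prop

variable {Cd : ConstraintDomain S}

/-- Atomic constraints: primitive atoms and equations. -/
inductive ACon (Cd : ConstraintDomain S) : Type
  | prim : Cd.PP → List (Term S) → ACon Cd
  | eq : Term S → Term S → ACon Cd

/-- Application of a substitution to an atomic constraint. -/
def ACon.subst (θ : Subst S) : ACon Cd → ACon Cd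
  | .prim r ts => .prim r (ts.map (Term.subst θ))
  | .eq t s => .eq (t.subst θ) (s.subst θ)

/-- Truth of a (ground) atomic constraint: primitive atoms via the
interpretation of the constraint domain; a ground equation is true iff its two
sides are syntactically identical. -/
def ACon.holds : ACon Cd → Prop
  | .prim r ts => Cd.primTrue r ts
  | .eq t s => t = s

/-- A valuation `η` solves an atomic constraint `c` iff `c η` is true. -/
def solves (η : Subst S) (c : ACon Cd) : Prop := (c.subst η).holds

/-- The variable `x` occurs in the atomic constraint. -/
inductive ACon.HasVar (x : S.Var) : ACon Cd → Prop
  | prim (r : Cd.PP) (ts : List (Term S)) (t : Term S) :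
      t ∈ ts → Term.HasVar x t → HasVar x (.prim r ts)
  | eqL (t s : Term S) : Term.HasVar x t → HasVar x (.eq t s)
  | eqR (t s : Term S) : Term.HasVar x s → HasVar x (.eq t s)

/-- The set of solutions (valuations) of a set of atomic constraints. -/
def SolC (Pi : Set (ACon Cd)) : Set (Subst S) :=
  {η | IsValuation η ∧ ∀ c ∈ Pi, solves η c}

/-- A set of constraints is satisfiable iff it has some solution. -/
def Satisfiable (Pi : Set (ACon Cd)) : Prop := (SolC Pi).Nonempty

/-- Constraint entailment `Pi ⊨ c`. -/
def entails (Pi : Set (ACon Cd)) (c : ACon Cd) : Prop := ∀ η ∈ SolC Pi, solves η c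

/-- An existential constraint `∃ Y₁ … Y_k (B₁ ∧ … ∧ B_m)`. -/
structure ExCon (Cd : ConstraintDomain S) where
  evars : List S.Var
  body : List (ACon Cd)

/-- A valuation `η` solves an existential constraint iff some valuation
agreeing with `η` except possibly on the existential variables makes every
atomic constraint of the body true. -/
def ExCon.SolvedBy (e : ExCon Cd) (η : Subst S) : Prop :=
  ∃ η' : Subst S, IsValuation η' ∧ (∀ x, x ∉ e.evars → η' x = η x) ∧
    ∀ c ∈ e.body, solves η' c

/-- Entailment of an existential constraint. -/
def entailsEx (Pi : Set (ACon Cd)) (e : ExCon Cd) : Prop := ∀ η ∈ SolC Pi, e.SolvedBy η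

/-- A free variable of an existential constraint. -/
def ExCon.FVar (e : ExCon Cd) (x : S.Var) : Prop :=
  x ∉ e.evars ∧ ∃ c ∈ e.body, ACon.HasVar x c

/-- Atoms over a constraint domain and an alphabet `DP` of defined predicate
symbols: defined atoms, primitive atoms and equations. -/
inductive Atom (Cd : ConstraintDomain S) (DP : Type) : Type
  | defined : DP → List (Term S) → Atom Cd DP
  | prim : Cd.PP → List (Term S) → Atom Cd DP
  | eq : Term S → Term S → Atom Cd DP

variable {DP : Type}

/-- Application of a substitution to an atom. -/
def Atom.subst (θ : Subst S) : Atom Cd DP → Atom Cd DP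
  | .defined p ts => .defined p (ts.map (Term.subst θ))
  | .prim r ts => .prim r (ts.map (Term.subst θ))
  | .eq t s => .eq (t.subst θ) (s.subst θ)

/-- Atomic constraints regarded as atoms. -/
def ACon.toAtom : ACon Cd → Atom Cd DP
  | .prim r ts => .prim r ts
  | .eq t s => .eq t s

/-- The variable `x` occurs in the atom. -/
inductive Atom.HasVar (x : S.Var) : Atom Cd DP → Prop
  | defined (p : DP) (ts : List (Term S)) (t : Term S) :
      t ∈ ts → Term.HasVar x t → HasVar x (.defined p ts)
  | prim (r : Cd.PP) (ts : List (Term S)) (t : Term S) :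
      t ∈ ts → Term.HasVar x t → HasVar x (.prim r ts)
  | eqL (t s : Term S) : Term.HasVar x t → HasVar x (.eq t s)
  | eqR (t s : Term S) : Term.HasVar x s → HasVar x (.eq t s)

/-- A clause `p(t₁,…,tₙ) ← B₁,…,Bₘ` of a CLP(𝒞)-program. -/
structure Clause (Cd : ConstraintDomain S) (DP : Type) where
  head : DP
  args : List (Term S)
  body : List (Atom Cd DP)

/-- Constrained Horn Logic derivability `𝒫 ⊢_CHL (A ⇐ Pi)`, with the inference
rules (DA), (EA) and (PA). -/
inductive CHL (P : Set (Clause Cd DP)) (Pi : Set (ACon Cd)) : Atom Cd DP → Prop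
  | DA (cl : Clause Cd DP) (θ : Subst S) (args' : List (Term S))
      (hmem : cl ∈ P) (hlen : args'.length = cl.args.length)
      (hargs : ∀ (i : ℕ) (h1 : i < args'.length) (h2 : i < cl.args.length),
        CHL P Pi (.eq (args'.get ⟨i, h1⟩) ((cl.args.get ⟨i, h2⟩).subst θ)))
      (hbody : ∀ B ∈ cl.body, CHL P Pi (B.subst θ)) :
      CHL P Pi (.defined cl.head args')
  | EA (t s : Term S) (h : entails Pi (.eq t s)) : CHL P Pi (.eq t s)
  | PA (r : Cd.PP) (ts : List (Term S)) (h : entails Pi (.prim r ts)) :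
      CHL P Pi (.prim r ts)

end SQCLP

namespace SQCLP

/-- The term signature of the real constraint domain `ℛ𝕖`: variables `ℕ`,
basic values the real numbers, no data constructors. -/
def RSig : TSig := { Var := ℕ, BV := ℝ, DC := Empty, dcArity := fun e => e.elim }

/-- The primitive predicate symbols `op₊` (ternary) and `cp≥` (binary). -/
inductive RPP : Type
  | opPlus : RPP
  | cpGe : RPP

/-- The real constraint domain `ℛ𝕖`: `op₊(t,s,u)` is true iff `t,s,u` are real
numbers with `t + s = u`, and `cp≥(t,s)` is true iff `t,s` are real numbers
with `t ≥ s`. -/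
def RCd : ConstraintDomain RSig where
  PP := RPP
  ppArity := fun r => match r with | .opPlus => 3 | .cpGe => 2
  primTrue := fun r ts => match r with
    | .opPlus => ∃ a b c : ℝ, ts = [Term.bv a, Term.bv b, Term.bv c] ∧ a + b = c
    | .cpGe => ∃ a b : ℝ, ts = [Term.bv a, Term.bv b] ∧ a ≥ b

/-- A single defined predicate symbol `p` (unary). -/
inductive RDP : Type
  | p : RDP

/-- The variable `X`. -/
def vX : Term RSig := Term.var (0 : ℕ)
/-- The variable `Y`. -/
def vY : Term RSig := Term.var (1 : ℕ)

/-- The existential constraint `π(X) = ∃Y (op₊(Y,Y,X))`. -/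
def piX : ExCon RCd := ⟨[(1 : ℕ)], [ACon.prim RPP.opPlus [vY, vY, vX]]⟩

/-- The clause `p(X) ← op₊(Y,Y,X)`. -/
def C₀ : Clause RCd RDP := ⟨RDP.p, [vX], [Atom.prim RPP.opPlus [vY, vY, vX]]⟩

/-- The constraint set `Π = {cp≥(X, 0.0)}`. -/
def PiR : Set (ACon RCd) := {ACon.prim RPP.cpGe [vX, Term.bv (0 : ℝ)]}

section General

variable {S : TSig} {Cd : ConstraintDomain S} {DP : Type} {P : Set (Clause Cd DP)}
  {Pi : Set (ACon Cd)}

theorem CHL.entails_eq {t s : Term S} (h : CHL P Pi (.eq t s)) : entails Pi (.eq t s) := by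
  cases h with
  | EA _ _ h => exact h

theorem CHL.entails_prim {r : Cd.PP} {ts : List (Term S)} (h : CHL P Pi (.prim r ts)) :
    entails Pi (.prim r ts) := by
  cases h with
  | PA _ _ h => exact h

theorem entails_prim_of_entails_eq {r : Cd.PP} {ts : List (Term S)} {u t : Term S}
    (he : entails Pi (.eq u t)) (h : entails Pi (.prim r (ts ++ [t]))) :
    entails Pi (.prim r (ts ++ [u])) := by
  intro η hη
  have hut : u.subst η = t.subst η := he η hη
  simpa [solves, ACon.subst, hut] using h η hη

end General

theorem Term.IsGround.exists_eq_bv {t : Term RSig} (ht : t.IsGround) : ∃ a : ℝ, t = .bv a := by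
  cases ht with
  | bv a => exact ⟨a, rfl⟩
  | app c _ _ => exact (c : Empty).elim

theorem piX_solvedBy {η : Subst RSig} (hη : IsValuation η) : piX.SolvedBy η := by
  obtain ⟨a, ha⟩ := (hη (0 : ℕ)).exists_eq_bv
  have hY : _ ∈ piX.evars := List.mem_singleton_self _
  -- membership at type `RSig.Var`, as in the goal, so that `if_neg hX` can rewrite there
  have hX : ¬ @Membership.mem RSig.Var _ _ piX.evars (0 : ℕ) :=
    fun h => Nat.zero_ne_one (List.mem_singleton.mp h)
  refine ⟨fun x => if x ∈ piX.evars then .bv (a / 2) else η x, fun x => ?_,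
    fun x hx => if_neg hx, fun c hc => ?_⟩
  · dsimp only
    split
    · exact .bv _
    · exact hη x
  · obtain rfl := List.mem_singleton.mp hc
    refine ⟨a / 2, a / 2, a, ?_, add_halves a⟩
    simp only [List.map, vX, vY, Term.subst, if_pos hY, if_neg hX, ha]
    rfl

theorem entailsEx_piR_piX : entailsEx PiR piX := fun _ hη => piX_solvedBy hη.1

noncomputable def valX (r : ℝ) : Subst RSig :=
  fun x => if Term.var x = vX then .bv r else .bv (0 : ℝ)

theorem subst_valX_vX (r : ℝ) : vX.subst (valX r) = .bv r := if_pos rfl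

theorem subst_valX_of_ne {s : Term RSig} (hs : s ≠ vX) (r r' : ℝ) :
    s.subst (valX r) = s.subst (valX r') := by
  cases s with
  | var x => exact (if_neg hs).trans (if_neg hs).symm
  | bv u => rfl
  | app c _ => exact (c : Empty).elim

theorem valX_mem_solC {r : ℝ} (hr : 0 ≤ r) : valX r ∈ SolC PiR := by
  refine ⟨fun x => ?_, fun c hc => ?_⟩
  · unfold valX
    split <;> exact .bv _
  · obtain rfl := Set.mem_singleton_iff.mp hc
    refine ⟨r, 0, ?_, hr⟩
    simp only [List.map, subst_valX_vX]
    rfl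

theorem exists_of_solves_opPlus {η : Subst RSig} {s t : Term RSig} {r : ℝ}
    (ht : t.subst η = .bv r) (h : solves η (ACon.prim (Cd := RCd) RPP.opPlus [s, s, t])) :
    ∃ a : ℝ, s.subst η = .bv a ∧ a + a = r := by
  obtain ⟨a, b, c, heq, hsum⟩ := h
  simp only [List.map, List.cons.injEq, ht, and_true] at heq
  obtain ⟨hsa, hsb, hrc⟩ := heq
  obtain rfl : a = b := Term.bv.inj (hsa.symm.trans hsb)
  exact ⟨a, hsa, hsum.trans (Term.bv.inj hrc).symm⟩

theorem not_entails_opPlus_self_self_vX (s : Term RSig) :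
    ¬ entails PiR (.prim RPP.opPlus [s, s, vX]) := by
  intro h
  obtain ⟨a₀, hs₀, h₀⟩ := exists_of_solves_opPlus (subst_valX_vX 0) (h _ (valX_mem_solC le_rfl))
  obtain ⟨a₁, hs₁, h₁⟩ :=
    exists_of_solves_opPlus (subst_valX_vX 1) (h _ (valX_mem_solC zero_le_one))
  by_cases hs : s = vX
  · subst hs
    rw [subst_valX_vX] at hs₁
    obtain rfl := Term.bv.inj hs₁
    linarith
  · rw [subst_valX_of_ne hs 1 0, hs₀] at hs₁
    obtain rfl := Term.bv.inj hs₁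
    linarith

theorem exists_subst_of_CHL_p {P : Set (Clause RCd RDP)} {Pi : Set (ACon RCd)}
    (honly : ∀ cl ∈ P, cl.head = RDP.p → cl = C₀) {t : Term RSig}
    (h : CHL P Pi (.defined RDP.p [t])) :
    ∃ θ : Subst RSig, entails Pi (.eq t (vX.subst θ)) ∧
      entails Pi (.prim RPP.opPlus [vY.subst θ, vY.subst θ, vX.subst θ]) := by
  cases h with
  | DA cl θ _ hcl _ hargs hbody =>
    obtain rfl := honly cl hcl rfl
    exact ⟨θ, (hargs 0 (by simp) (by simp [C₀])).entails_eq,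
      (hbody _ (List.mem_singleton_self _)).entails_prim⟩

/-- in the real constraint domain, for any program `𝒫` containing
the clause `p(X) ← op₊(Y,Y,X)` and no other occurrence of `p`, with
`Π = {cp≥(X,0.0)}`: `Π ⊨ π(X)` holds, yet `𝒫 ⊢_CHL (p(X) ⇐ Π)` does not; in
particular there is no term `s` with `Π ⊨ op₊(s,s,X)`. -/
theorem stmt6 (P : Set (Clause RCd RDP)) (hmem : C₀ ∈ P)
    (honly : ∀ cl ∈ P, (cl.head = RDP.p ∨
      ∃ A ∈ cl.body, ∃ ts, A = Atom.defined RDP.p ts) → cl = C₀) :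
    entailsEx PiR piX ∧
    ¬ CHL P PiR (.defined RDP.p [vX]) ∧
    ∀ s : Term RSig, ¬ entails PiR (ACon.prim RPP.opPlus [s, s, vX]) := by
  refine ⟨entailsEx_piR_piX, fun h => ?_, not_entails_opPlus_self_self_vX⟩
  obtain ⟨θ, hX, hY⟩ := exists_subst_of_CHL_p (fun cl hcl hp => honly cl hcl (.inl hp)) h
  exact not_entails_opPlus_self_self_vX _ (entails_prim_of_entails_eq (ts := [_, _]) hX hY)

end SQCLP
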